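/- Fix real numbers m ≠ 0, ℏ > 0, and v ∈ ℝ. Let χ : ℝ × ℝ × ℝ → ℂ be smooth (arguments (u,y,t)) and define f : ℝ × ℝ × ℝ × ℂ → ℂ by f(u,y,t,z) = z·χ(u,y,t). Define the map π_v(u,y,t,z) = ( u + v, y + v·t, t, W_v(y + v·t, t)^{-1}·z ), where W_v(y,t) = exp( (i·m/ℏ)( y·v − (t/2)·v² ) ), and the differential operator D̃_m g = ∂²g/∂y² + (2·i·m/ℏ)·∂g/∂t. Then D̃_m( f ∘ π_v ) = ( D̃_m f ) ∘ π_v. That is, the extended free Schrödinger operator is invariant under the ℝ-action π_v on functions linear in the fiber variable z. -/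

import Mathlib

/-- Partial derivative in `y` of a function `g : ℝ × ℝ × ℝ × ℂ → ℂ`
(coordinates `(u,y,t,z)`). -/
noncomputable def pdyE (g : ℝ × ℝ × ℝ × ℂ → ℂ) (p : ℝ × ℝ × ℝ × ℂ) : ℂ :=
  deriv (fun s : ℝ => g (p.1, s, p.2.2.1, p.2.2.2)) p.2.1

/-- Partial derivative in `t` of a function `g : ℝ × ℝ × ℝ × ℂ → ℂ`
(coordinates `(u,y,t,z)`). -/
noncomputable def pdtE (g : ℝ × ℝ × ℝ × ℂ → ℂ) (p : ℝ × ℝ × ℝ × ℂ) : ℂ :=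
  deriv (fun s : ℝ => g (p.1, p.2.1, s, p.2.2.2)) p.2.2.1

/-- The extended free Schrödinger operator `D̃_m g = ∂²g/∂y² + (2·i·m/ℏ)·∂g/∂t`. -/
noncomputable def Dext (m hbar : ℝ) (g : ℝ × ℝ × ℝ × ℂ → ℂ) (p : ℝ × ℝ × ℝ × ℂ) : ℂ :=
  pdyE (pdyE g) p + 2 * Complex.I * m / hbar * pdtE g p

/-- The plane wave `W_v(y,t) = exp((i·m/ℏ)(y·v − (t/2)·v²))`. -/
noncomputable def planeWave (m hbar v y t : ℝ) : ℂ :=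
  Complex.exp (Complex.I * m / hbar * (y * v - (t / 2) * v ^ 2))

/-- The `ℝ`-action
`π_v(u,y,t,z) = (u + v, y + v·t, t, W_v(y + v·t, t)⁻¹·z)`. -/
noncomputable def piAction (m hbar v : ℝ) (p : ℝ × ℝ × ℝ × ℂ) : ℝ × ℝ × ℝ × ℂ :=
  (p.1 + v, p.2.1 + v * p.2.2.1, p.2.2.1,
    (planeWave m hbar v (p.2.1 + v * p.2.2.1) p.2.2.1)⁻¹ * p.2.2.2)

noncomputable def Dy (χ : ℝ × ℝ × ℝ → ℂ) (p : ℝ × ℝ × ℝ) : ℂ := fderiv ℝ χ p (0,1,0)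
noncomputable def Dt' (χ : ℝ × ℝ × ℝ → ℂ) (p : ℝ × ℝ × ℝ) : ℂ := fderiv ℝ χ p (0,0,1)

noncomputable def Einv (m hbar v Y T : ℝ) : ℂ :=
  Complex.exp (-(Complex.I * m / hbar * (Y * v - (T / 2) * v ^ 2)))

lemma pw_inv (m hbar v Y T : ℝ) : (planeWave m hbar v Y T)⁻¹ = Einv m hbar v Y T := by
  rw [planeWave, Einv, ← Complex.exp_neg]

lemma lineDeriv' {χ : ℝ × ℝ × ℝ → ℂ} (hχ : Differentiable ℝ χ)
    (a b c wa wb wc s : ℝ) :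
    HasDerivAt (fun s : ℝ => χ (a + wa*s, b + wb*s, c + wc*s))
      (fderiv ℝ χ (a + wa*s, b + wb*s, c + wc*s) (wa, wb, wc)) s := by
  have h1 : HasDerivAt (fun s : ℝ => a + wa*s) wa s := by
    simpa using ((hasDerivAt_id s).const_mul wa).const_add a
  have h2 : HasDerivAt (fun s : ℝ => b + wb*s) wb s := by
    simpa using ((hasDerivAt_id s).const_mul wb).const_add b
  have h3 : HasDerivAt (fun s : ℝ => c + wc*s) wc s := by
    simpa using ((hasDerivAt_id s).const_mul wc).const_add c
  exact ((hχ _).hasFDerivAt).comp_hasDerivAt s (h1.prodMk (h2.prodMk h3))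

lemma slice_y {χ : ℝ × ℝ × ℝ → ℂ} (hχd : Differentiable ℝ χ) (a b t y : ℝ) :
    HasDerivAt (fun s : ℝ => χ (a, s + b, t)) (Dy χ (a, y + b, t)) y := by
  have h := lineDeriv' hχd a b t 0 1 0 y
  simp only [zero_mul, add_zero, one_mul] at h
  rw [Dy]
  simpa [add_comm] using h

lemma slice_y0 {χ : ℝ × ℝ × ℝ → ℂ} (hχd : Differentiable ℝ χ) (a t y : ℝ) :
    HasDerivAt (fun s : ℝ => χ (a, s, t)) (Dy χ (a, y, t)) y := by
  simpa using slice_y hχd a 0 t y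

lemma slice_t0 {χ : ℝ × ℝ × ℝ → ℂ} (hχd : Differentiable ℝ χ) (a b t : ℝ) :
    HasDerivAt (fun s : ℝ => χ (a, b, s)) (Dt' χ (a, b, t)) t := by
  have h := lineDeriv' hχd a b 0 0 0 1 t
  simp only [zero_mul, add_zero, one_mul, zero_add] at h
  rw [Dt']
  simpa using h

lemma expAff (α β : ℂ) (s : ℝ) :
    HasDerivAt (fun s : ℝ => Complex.exp (α * s + β)) (α * Complex.exp (α * s + β)) s := by
  have h1 : HasDerivAt (fun s : ℝ => (s:ℂ)) 1 s := (hasDerivAt_id s).ofReal_comp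
  simpa [mul_comm] using (((h1.const_mul α).add_const β)).cexp

lemma Einv_y (m hbar v t y : ℝ) :
    HasDerivAt (fun s : ℝ => Einv m hbar v (s + v*t) t)
      (-(Complex.I*m/hbar*v) * Einv m hbar v (y + v*t) t) y := by
  have heq : (fun s : ℝ => Einv m hbar v (s + v*t) t)
      = fun s : ℝ => Complex.exp ((-(Complex.I*m/hbar*v)) * s
          + (-(Complex.I*(m:ℂ)/hbar*((v*t*v : ℝ) - (t/2)*v^2)))) := by
    funext s; rw [Einv]; congr 1; push_cast; ring
  rw [heq]
  convert expAff _ _ y using 2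
  rw [Einv]; congr 1; push_cast; ring

lemma Einv_t (m hbar v y t : ℝ) :
    HasDerivAt (fun s : ℝ => Einv m hbar v (y + v*s) s)
      (-(Complex.I*m/hbar*(v^2/2)) * Einv m hbar v (y + v*t) t) t := by
  have heq : (fun s : ℝ => Einv m hbar v (y + v*s) s)
      = fun s : ℝ => Complex.exp ((-(Complex.I*m/hbar*(v^2/2))) * s
          + (-(Complex.I*(m:ℂ)/hbar*((y*v : ℝ))))) := by
    funext s; rw [Einv]; congr 1; push_cast; ring
  rw [heq]
  convert expAff _ _ t using 2
  rw [Einv]; congr 1; push_cast; ring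

lemma fderiv_split {χ : ℝ × ℝ × ℝ → ℂ} (v : ℝ) (q : ℝ × ℝ × ℝ) :
    fderiv ℝ χ q (0, v, 1) = (v:ℂ) * Dy χ q + Dt' χ q := by
  have h : ((0, v, 1) : ℝ × ℝ × ℝ) = v • ((0,1,0) : ℝ × ℝ × ℝ) + (0,0,1) := by
    simp [Prod.ext_iff]
  rw [h, map_add, map_smul, Dy, Dt', Complex.real_smul]

section Main

variable (m hbar v : ℝ) {χ : ℝ × ℝ × ℝ → ℂ}

lemma key1 (hχd : Differentiable ℝ χ) (u y t : ℝ) (z : ℂ) :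
    pdyE ((fun q : ℝ × ℝ × ℝ × ℂ => q.2.2.2 * χ (q.1,q.2.1,q.2.2.1)) ∘ piAction m hbar v) (u,y,t,z)
    = Einv m hbar v (y+v*t) t * z *
        (-(Complex.I*m/hbar*v) * χ (u+v, y+v*t, t) + Dy χ (u+v, y+v*t, t)) := by
  have hs : HasDerivAt (fun s : ℝ => χ (u+v, s + v*t, t)) (Dy χ (u+v, y + v*t, t)) y :=
    slice_y hχd (u+v) (v*t) t y
  have hD := ((Einv_y m hbar v t y).mul_const z).fun_mul hs
  have hrw : (fun s : ℝ => ((fun q : ℝ × ℝ × ℝ × ℂ => q.2.2.2 * χ (q.1,q.2.1,q.2.2.1))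
        ∘ piAction m hbar v) (u, s, t, z))
      = fun s : ℝ => Einv m hbar v (s + v*t) t * z * χ (u+v, s + v*t, t) := by
    funext s; simp [piAction, Function.comp, pw_inv]
  have h0 : pdyE ((fun q : ℝ × ℝ × ℝ × ℂ => q.2.2.2 * χ (q.1,q.2.1,q.2.2.1)) ∘ piAction m hbar v)
      (u,y,t,z) = deriv (fun s : ℝ => ((fun q : ℝ × ℝ × ℝ × ℂ => q.2.2.2 * χ (q.1,q.2.1,q.2.2.1))
        ∘ piAction m hbar v) (u, s, t, z)) y := rfl
  rw [h0, hrw, hD.deriv]; ring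

lemma key2 (hχ : ContDiff ℝ (⊤ : ℕ∞) χ) (u y t : ℝ) (z : ℂ) :
    pdyE (pdyE ((fun q : ℝ × ℝ × ℝ × ℂ => q.2.2.2 * χ (q.1,q.2.1,q.2.2.1)) ∘ piAction m hbar v))
      (u,y,t,z)
    = -(Complex.I*m/hbar*v) * Einv m hbar v (y+v*t) t * z *
        (-(Complex.I*m/hbar*v) * χ (u+v, y+v*t, t) + Dy χ (u+v, y+v*t, t))
      + Einv m hbar v (y+v*t) t * z *
        (-(Complex.I*m/hbar*v) * Dy χ (u+v, y+v*t, t) + Dy (Dy χ) (u+v, y+v*t, t)) := by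
  have hχd : Differentiable ℝ χ := hχ.differentiable (by simp)
  have hDyC : ContDiff ℝ (⊤ : ℕ∞) (Dy χ) := (hχ.fderiv_right (by simp)).clm_apply contDiff_const
  have hDyd : Differentiable ℝ (Dy χ) := hDyC.differentiable (by simp)
  have h1 : (fun s : ℝ => pdyE ((fun q : ℝ × ℝ × ℝ × ℂ => q.2.2.2 * χ (q.1,q.2.1,q.2.2.1))
        ∘ piAction m hbar v) (u,s,t,z))
      = fun s : ℝ => Einv m hbar v (s+v*t) t * z *
          (-(Complex.I*m/hbar*v) * χ (u+v, s+v*t, t) + Dy χ (u+v, s+v*t, t)) := by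
    funext s; exact key1 m hbar v hχd u s t z
  have hs1 : HasDerivAt (fun s : ℝ => χ (u+v, s + v*t, t)) (Dy χ (u+v, y + v*t, t)) y :=
    slice_y hχd (u+v) (v*t) t y
  have hs2 : HasDerivAt (fun s : ℝ => Dy χ (u+v, s + v*t, t)) (Dy (Dy χ) (u+v, y + v*t, t)) y :=
    slice_y hDyd (u+v) (v*t) t y
  have hD := ((Einv_y m hbar v t y).mul_const z).fun_mul
    ((hs1.const_mul (-(Complex.I*m/hbar*v))).fun_add hs2)
  have h0 : pdyE (pdyE ((fun q : ℝ × ℝ × ℝ × ℂ => q.2.2.2 * χ (q.1,q.2.1,q.2.2.1))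
        ∘ piAction m hbar v)) (u,y,t,z)
      = deriv (fun s : ℝ => pdyE ((fun q : ℝ × ℝ × ℝ × ℂ => q.2.2.2 * χ (q.1,q.2.1,q.2.2.1))
        ∘ piAction m hbar v) (u,s,t,z)) y := rfl
  rw [h0, h1, hD.deriv]

lemma key3 (hχd : Differentiable ℝ χ) (u y t : ℝ) (z : ℂ) :
    pdtE ((fun q : ℝ × ℝ × ℝ × ℂ => q.2.2.2 * χ (q.1,q.2.1,q.2.2.1)) ∘ piAction m hbar v) (u,y,t,z)
    = -(Complex.I*m/hbar*(v^2/2)) * Einv m hbar v (y+v*t) t * z * χ (u+v, y+v*t, t)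
      + Einv m hbar v (y+v*t) t * z *
          ((v:ℂ) * Dy χ (u+v, y+v*t, t) + Dt' χ (u+v, y+v*t, t)) := by
  have hs : HasDerivAt (fun s : ℝ => χ (u+v, y + v*s, s))
      (fderiv ℝ χ (u+v, y + v*t, t) (0, v, 1)) t := by
    have h := lineDeriv' hχd (u+v) y 0 0 v 1 t
    simp only [zero_mul, add_zero, one_mul, zero_add] at h
    exact h
  rw [fderiv_split] at hs
  have hD := ((Einv_t m hbar v y t).mul_const z).fun_mul hs
  have hrw : (fun s : ℝ => ((fun q : ℝ × ℝ × ℝ × ℂ => q.2.2.2 * χ (q.1,q.2.1,q.2.2.1))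
        ∘ piAction m hbar v) (u, y, s, z))
      = fun s : ℝ => Einv m hbar v (y + v*s) s * z * χ (u+v, y + v*s, s) := by
    funext s; simp [piAction, Function.comp, pw_inv]
  have h0 : pdtE ((fun q : ℝ × ℝ × ℝ × ℂ => q.2.2.2 * χ (q.1,q.2.1,q.2.2.1)) ∘ piAction m hbar v)
      (u,y,t,z) = deriv (fun s : ℝ => ((fun q : ℝ × ℝ × ℝ × ℂ => q.2.2.2 * χ (q.1,q.2.1,q.2.2.1))
        ∘ piAction m hbar v) (u, y, s, z)) t := rfl
  rw [h0, hrw, hD.deriv]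

lemma keyR1 (hχd : Differentiable ℝ χ) (u y t : ℝ) (z : ℂ) :
    pdyE (fun q : ℝ × ℝ × ℝ × ℂ => q.2.2.2 * χ (q.1,q.2.1,q.2.2.1)) (u,y,t,z)
    = z * Dy χ (u,y,t) := by
  have h0 : pdyE (fun q : ℝ × ℝ × ℝ × ℂ => q.2.2.2 * χ (q.1,q.2.1,q.2.2.1)) (u,y,t,z)
      = deriv (fun s : ℝ => z * χ (u,s,t)) y := rfl
  rw [h0, ((slice_y0 hχd u t y).const_mul z).deriv]

lemma keyR2 (hχ : ContDiff ℝ (⊤ : ℕ∞) χ) (u y t : ℝ) (z : ℂ) :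
    pdyE (pdyE (fun q : ℝ × ℝ × ℝ × ℂ => q.2.2.2 * χ (q.1,q.2.1,q.2.2.1))) (u,y,t,z)
    = z * Dy (Dy χ) (u,y,t) := by
  have hχd : Differentiable ℝ χ := hχ.differentiable (by simp)
  have hDyd : Differentiable ℝ (Dy χ) :=
    ((hχ.fderiv_right (m := (⊤ : ℕ∞)) (by simp)).clm_apply contDiff_const).differentiable (by simp)
  have h1 : (fun s : ℝ => pdyE (fun q : ℝ × ℝ × ℝ × ℂ => q.2.2.2 * χ (q.1,q.2.1,q.2.2.1)) (u,s,t,z))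
      = fun s : ℝ => z * Dy χ (u,s,t) := by
    funext s; exact keyR1 hχd u s t z
  have h0 : pdyE (pdyE (fun q : ℝ × ℝ × ℝ × ℂ => q.2.2.2 * χ (q.1,q.2.1,q.2.2.1))) (u,y,t,z)
      = deriv (fun s : ℝ => pdyE (fun q : ℝ × ℝ × ℝ × ℂ => q.2.2.2 * χ (q.1,q.2.1,q.2.2.1))
          (u,s,t,z)) y := rfl
  rw [h0, h1, ((slice_y0 hDyd u t y).const_mul z).deriv]

lemma keyR3 (hχd : Differentiable ℝ χ) (u y t : ℝ) (z : ℂ) :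
    pdtE (fun q : ℝ × ℝ × ℝ × ℂ => q.2.2.2 * χ (q.1,q.2.1,q.2.2.1)) (u,y,t,z)
    = z * Dt' χ (u,y,t) := by
  have h0 : pdtE (fun q : ℝ × ℝ × ℝ × ℂ => q.2.2.2 * χ (q.1,q.2.1,q.2.2.1)) (u,y,t,z)
      = deriv (fun s : ℝ => z * χ (u,y,s)) t := rfl
  rw [h0, ((slice_t0 hχd u y t).const_mul z).deriv]

end Main

/-- The extended free Schrödinger operator is invariant under the `ℝ`-action `π_v` on
functions `f(u,y,t,z) = z·χ(u,y,t)` linear in the fiber variable: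
`D̃_m(f ∘ π_v) = (D̃_m f) ∘ π_v`. -/
theorem extended_schrodinger_invariant
    (m hbar v : ℝ) (hm : m ≠ 0) (hh : 0 < hbar)
    (χ : ℝ × ℝ × ℝ → ℂ) (hχ : ContDiff ℝ (⊤ : ℕ∞) χ) :
    ∀ p : ℝ × ℝ × ℝ × ℂ,
      Dext m hbar
        ((fun q : ℝ × ℝ × ℝ × ℂ => q.2.2.2 * χ (q.1, q.2.1, q.2.2.1)) ∘ piAction m hbar v) p
      = Dext m hbar (fun q : ℝ × ℝ × ℝ × ℂ => q.2.2.2 * χ (q.1, q.2.1, q.2.2.1))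
          (piAction m hbar v p) := by
  intro p
  obtain ⟨u, y, t, z⟩ := p
  have hχd : Differentiable ℝ χ := hχ.differentiable (by simp)
  have hπ : piAction m hbar v (u,y,t,z) = (u+v, y+v*t, t, Einv m hbar v (y+v*t) t * z) := by
    simp [piAction, pw_inv]
  rw [Dext, Dext, hπ, key2 m hbar v hχ, key3 m hbar v hχd, keyR2 hχ, keyR3 hχd]
  ring
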